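/- Let g : X → ℝ be convex, differentiable, and strictly positive on an open convex set X ⊆ ℝⁿ. Then f(x) = log(g(x)) is invex with kernel η(x,y) = (g(x)/g(y))·(y - x); that is, f(y) - f(x) ≥ ⟨∇f(x), η(x,y)⟩ for all x, y ∈ X. -/

import Mathlib

/-!
Along the segment from `x` to `y`, convexity of `g` gives the first-order bound
`Dg(x)(y - x) ≤ g y - g x`. Since `∇(log g)(x) = ∇g(x) / g(x)`, the kernel's factor `g x / g y`
turns the inner product into `Dg(x)(y - x) / g y ≤ 1 - g x / g y`, and
`1 - 1/t ≤ log t` at `t = g y / g x` finishes.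
-/

open RealInnerProductSpace

theorem ConvexOn.fderiv_sub_le {E : Type*} [NormedAddCommGroup E] [NormedSpace ℝ E]
    {s : Set E} {g : E → ℝ} (hg : ConvexOn ℝ s g) {x y : E} (hx : x ∈ s) (hy : y ∈ s)
    (hgx : DifferentiableAt ℝ g x) :
    fderiv ℝ g x (y - x) ≤ g y - g x := by
  let L : ℝ →ᵃ[ℝ] E := AffineMap.lineMap x y
  have hgL : HasDerivAt (g ∘ L) (fderiv ℝ g x (y - x)) 0 := by
    refine HasFDerivAt.comp_hasDerivAt (0 : ℝ) ?_ AffineMap.hasDerivAt_lineMap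
    simpa [L] using hgx.hasFDerivAt
  simpa [L, slope_def_field] using
    (hg.comp_affineMap L).le_slope_of_hasDerivAt (x := 0) (y := 1) (by simpa [L] using hx)
      (by simpa [L] using hy) one_pos hgL

theorem inner_gradient_log_comp {F : Type*} [NormedAddCommGroup F] [InnerProductSpace ℝ F]
    [CompleteSpace F] {g : F → ℝ} {x : F} (hgx : DifferentiableAt ℝ g x) (hx : g x ≠ 0) (v : F) :
    ⟪gradient (fun z => Real.log (g z)) x, v⟫ = fderiv ℝ g x v / g x := by
  rw [gradient, InnerProductSpace.toDual_symm_apply, (hgx.hasFDerivAt.log hx).fderiv]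
  simp [div_eq_inv_mul]

theorem Real.one_sub_div_le_log_sub_log {a b : ℝ} (ha : 0 < a) (hb : 0 < b) :
    1 - a / b ≤ Real.log b - Real.log a := by
  simpa [← Real.log_div hb.ne' ha.ne'] using Real.one_sub_inv_le_log_of_pos (div_pos hb ha)

theorem invex_log_of_convex_general {n : ℕ}
    (X : Set (EuclideanSpace ℝ (Fin n)))
    (g : EuclideanSpace ℝ (Fin n) → ℝ)
    (hgconv : ConvexOn ℝ X g) (hgdiff : ∀ x ∈ X, DifferentiableAt ℝ g x)
    (hgpos : ∀ x ∈ X, 0 < g x) :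
    ∀ x ∈ X, ∀ y ∈ X,
      Real.log (g y) - Real.log (g x) ≥
        ⟪gradient (fun z => Real.log (g z)) x, (g x / g y) • (y - x)⟫ := by
  intro x hx y hy
  have hgx := hgpos x hx
  have hgy := hgpos y hy
  calc ⟪gradient (fun z => Real.log (g z)) x, (g x / g y) • (y - x)⟫
      = fderiv ℝ g x (y - x) / g y := by
        rw [real_inner_smul_right, inner_gradient_log_comp (hgdiff x hx) hgx.ne']
        field_simp
    _ ≤ (g y - g x) / g y := by
        gcongr
        exact hgconv.fderiv_sub_le hx hy (hgdiff x hx)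
    _ = 1 - g x / g y := by field_simp
    _ ≤ Real.log (g y) - Real.log (g x) := Real.one_sub_div_le_log_sub_log hgx hgy

/-- `f = log ∘ g` with `g` convex positive is invex with kernel
`η(x,y) = (g(x)/g(y))·(y-x)`. -/
theorem invex_log_of_convex {n : ℕ}
    (X : Set (EuclideanSpace ℝ (Fin n))) (hX : IsOpen X) (hXc : Convex ℝ X) (hXne : X.Nonempty)
    (g : EuclideanSpace ℝ (Fin n) → ℝ)
    (hgconv : ConvexOn ℝ X g) (hgdiff : ∀ x ∈ X, DifferentiableAt ℝ g x)
    (hgpos : ∀ x ∈ X, 0 < g x) :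
    ∀ x ∈ X, ∀ y ∈ X,
      Real.log (g y) - Real.log (g x) ≥
        ⟪gradient (fun z => Real.log (g z)) x, (g x / g y) • (y - x)⟫ :=
  invex_log_of_convex_general X g hgconv hgdiff hgpos
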